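/- Let \alpha_0,\alpha_1,\alpha_2,\alpha_3 be the standard basis of A_L = (F_3)^4 and define v = \sum_{\alpha} c_\alpha e_\alpha in C[A_L] where c_\alpha = \prod_{i=0}^3 \langle \alpha, \alpha_i \rangle interpreted as +1, 0, -1 according to whether the product of the four coordinates of \alpha in F_3 equals 1, 0, 2 respectively. Then \rho(S)v = v and \rho(T)v = \omega v, where \rho is the Weil representation on C[(F_3)^4] and \omega = e^{2\pi i/3}. -/

import Mathlib

/-- The discriminant quadratic form `q_L(x) = (2/3)(x₁² - x₂² - x₃² - x₄²)`
on `A_L = (F₃)⁴`, coordinates lifted to `{-1,0,1} ⊂ ℤ`. -/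
noncomputable def qLform (v : Fin 4 → ZMod 3) : ℚ :=
  (2 / 3) * (((v 0).valMinAbs : ℚ) ^ 2 - ((v 1).valMinAbs : ℚ) ^ 2 -
    ((v 2).valMinAbs : ℚ) ^ 2 - ((v 3).valMinAbs : ℚ) ^ 2)

/-- The associated bilinear form `b(x,y) = (2/3)(x₁y₁ - x₂y₂ - x₃y₃ - x₄y₄)`. -/
noncomputable def bLform (x y : Fin 4 → ZMod 3) : ℚ :=
  (2 / 3) * (((x 0).valMinAbs : ℚ) * ((y 0).valMinAbs : ℚ) -
    ((x 1).valMinAbs : ℚ) * ((y 1).valMinAbs : ℚ) -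
    ((x 2).valMinAbs : ℚ) * ((y 2).valMinAbs : ℚ) -
    ((x 3).valMinAbs : ℚ) * ((y 3).valMinAbs : ℚ))

/-- The matrix of `ρ(T)` in the Weil representation. -/
noncomputable def weilT : Matrix (Fin 4 → ZMod 3) (Fin 4 → ZMod 3) ℂ :=
  Matrix.diagonal fun α => Complex.exp ((Real.pi : ℂ) * Complex.I * ((qLform α : ℚ) : ℂ))

/-- The matrix of `ρ(S)` in the Weil representation. -/
noncomputable def weilS : Matrix (Fin 4 → ZMod 3) (Fin 4 → ZMod 3) ℂ :=
  Matrix.of fun δ α =>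
    (-1 / 9 : ℂ) * Complex.exp (-(Real.pi : ℂ) * Complex.I * ((bLform δ α : ℚ) : ℂ))

/-- The coefficient vector `v = ∑ c_α e_α` where `c_α` is `1, 0, -1`
according as the product of the four coordinates of `α` in `F₃` is
`1, 0, 2` (i.e. `c_α` is the lift of `∏ᵢ αᵢ` to `{-1,0,1}`). -/
noncomputable def specialVec (α : Fin 4 → ZMod 3) : ℂ :=
  (((∏ i, α i).valMinAbs : ℤ) : ℂ)

/-!
The form is diagonal and `v = f ⊗ f ⊗ f ⊗ f` with `f(a) = a.valMinAbs`, so `ρ(S)v` is `-1/9` times a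
product of four one-dimensional Fourier transforms of the odd function `f`; each of them is
`∓(ω - ω⁻¹) f`, and `(ω - ω⁻¹)⁴ = 9` while the four signs multiply to `-1`. As for `ρ(T)`, `v` is
supported where all coordinates are `±1`, and there `q_L = -4/3` and `e^{-4πi/3} = ω`.
-/

open Complex Finset
open scoped Matrix

local notation "ω" => Complex.exp (2 * Real.pi * I / 3)

/-- `valMinAbs` identifies `ZMod 3` with `{0, 1, -1}`, which is closed under multiplication. -/
def ZMod.valMinAbsHomThree : ZMod 3 →* ℤ where
  toFun := ZMod.valMinAbs
  map_one' := rfl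
  map_mul' := by decide

lemma specialVec_eq_prod (α : Fin 4 → ZMod 3) :
    specialVec α = ∏ i, ((α i).valMinAbs : ℂ) := by
  rw [specialVec, ← Int.cast_prod]
  exact congrArg _ (map_prod ZMod.valMinAbsHomThree α univ)

lemma sum_zpow_mul_valMinAbs {K : Type*} [DivisionRing K] (ζ : K) (k : ℤ) :
    ∑ a : ZMod 3, ζ ^ (k * a.valMinAbs) * a.valMinAbs = ζ ^ k - ζ ^ (-k) := by
  have huniv : (univ : Finset (ZMod 3)) = {0, 1, -1} := by decide
  have hone : (1 : ZMod 3).valMinAbs = 1 := rfl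
  have hneg : (-1 : ZMod 3).valMinAbs = -1 := rfl
  rw [huniv, sum_insert (by decide), sum_insert (by decide), sum_singleton, hone, hneg]
  simp [sub_eq_add_neg]

lemma zpow_sub_zpow_neg_of_natAbs_le_one {K : Type*} [DivisionRing K] (ζ : K) {k : ℤ}
    (hk : k.natAbs ≤ 1) : ζ ^ k - ζ ^ (-k) = k * (ζ - ζ⁻¹) := by
  obtain rfl | rfl | rfl : k = -1 ∨ k = 0 ∨ k = 1 := by omega
  all_goals simp

lemma exp_pi_mul_I_mul_two_thirds (n : ℤ) :
    Complex.exp (Real.pi * I * (2 / 3 * n)) = ω ^ n := by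
  rw [← exp_int_mul]
  ring_nf

lemma omega_isPrimitiveRoot : IsPrimitiveRoot ω 3 := by
  exact_mod_cast isPrimitiveRoot_exp 3 (by norm_num)

lemma omega_sq_mul_omega : ω ^ 2 * ω = 1 := by
  rw [← pow_succ, omega_isPrimitiveRoot.pow_eq_one]

lemma omega_sub_omega_inv_sq : (ω - ω⁻¹) ^ 2 = -3 := by
  have hsum : 1 + ω + ω ^ 2 = 0 := by
    simpa [sum_range_succ, add_assoc] using
      omega_isPrimitiveRoot.geom_sum_eq_zero (by norm_num)
  rw [← eq_inv_of_mul_eq_one_left omega_sq_mul_omega]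
  linear_combination hsum + (ω - 2) * omega_isPrimitiveRoot.pow_eq_one

def bLformSign : Fin 4 → ℤˣ := ![1, -1, -1, -1]

lemma bLform_eq_sum (x y : Fin 4 → ZMod 3) :
    bLform x y = 2 / 3 * ∑ i, ((bLformSign i * (x i).valMinAbs * (y i).valMinAbs : ℤ) : ℚ) := by
  simp only [bLform, Fin.sum_univ_four, bLformSign, Matrix.cons_val, Units.val_neg, Units.val_one]
  push_cast
  ring

lemma exp_neg_pi_mul_I_mul_bLform (x y : Fin 4 → ZMod 3) :
    Complex.exp (-Real.pi * I * (bLform x y : ℂ)) =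
      ∏ i, ω ^ (-(bLformSign i * (x i).valMinAbs) * (y i).valMinAbs) := by
  simp_rw [← exp_pi_mul_I_mul_two_thirds, ← Complex.exp_sum, bLform_eq_sum]
  push_cast
  rw [mul_sum, mul_sum]
  exact congrArg _ (sum_congr rfl fun i _ => by ring)

lemma natAbs_neg_units_mul_valMinAbs_le {n : ℕ} [NeZero n] (s : ℤˣ) (d : ZMod n) :
    (-(s * d.valMinAbs)).natAbs ≤ n / 2 := by
  rw [Int.natAbs_neg, Int.natAbs_mul, Int.natAbs_of_isUnit s.isUnit, one_mul]
  exact ZMod.natAbs_valMinAbs_le d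

lemma weilS_mulVec_specialVec : weilS *ᵥ specialVec = specialVec := by
  funext δ
  set k : Fin 4 → ℤ := fun i => -(bLformSign i * (δ i).valMinAbs)
  have hfactor (i : Fin 4) :
      ∑ a : ZMod 3, ω ^ (k i * a.valMinAbs) * a.valMinAbs = k i * (ω - ω⁻¹) := by
    rw [sum_zpow_mul_valMinAbs,
      zpow_sub_zpow_neg_of_natAbs_le_one _ (natAbs_neg_units_mul_valMinAbs_le _ _)]
  calc (weilS *ᵥ specialVec) δ
      = -1 / 9 * ∑ α : Fin 4 → ZMod 3, ∏ i, ω ^ (k i * (α i).valMinAbs) * (α i).valMinAbs := by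
        simp only [Matrix.mulVec, dotProduct, weilS, Matrix.of_apply, mul_sum]
        refine sum_congr rfl fun α _ => ?_
        rw [exp_neg_pi_mul_I_mul_bLform, specialVec_eq_prod, mul_assoc, ← prod_mul_distrib]
    _ = -1 / 9 * ∏ i, ∑ a : ZMod 3, ω ^ (k i * a.valMinAbs) * a.valMinAbs := by
        rw [Fintype.prod_sum]
    _ = -1 / 9 * (∏ i, (k i : ℂ)) * ((ω - ω⁻¹) ^ 2) ^ 2 := by
        simp_rw [hfactor, prod_mul_distrib, prod_const, card_univ, Fintype.card_fin]
        ring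
    _ = specialVec δ := by
        simp only [specialVec_eq_prod, omega_sub_omega_inv_sq, k, Fin.prod_univ_four, bLformSign,
          Matrix.cons_val, Units.val_neg, Units.val_one]
        push_cast
        ring

lemma qLform_of_forall_ne_zero {α : Fin 4 → ZMod 3} (hα : ∀ i, α i ≠ 0) :
    qLform α = -4 / 3 := by
  have hsq : ∀ x : ZMod 3, x ≠ 0 → x.valMinAbs ^ 2 = 1 := by decide
  simp only [qLform, ← Int.cast_pow, hsq _ (hα _)]
  norm_num

lemma weilT_mulVec_specialVec :
    weilT *ᵥ specialVec = fun α => ω * specialVec α := by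
  funext α
  rw [weilT, Matrix.mulVec_diagonal]
  rcases em (∃ i, α i = 0) with ⟨i, hi⟩ | hα
  · simp [specialVec, prod_eq_zero (mem_univ i) hi]
  · have hq : ((qLform α : ℚ) : ℂ) = 2 / 3 * ((-2 : ℤ) : ℂ) := by
      rw [qLform_of_forall_ne_zero (not_exists.mp hα)]
      push_cast
      ring
    rw [hq, exp_pi_mul_I_mul_two_thirds, zpow_neg, zpow_ofNat,
      inv_eq_of_mul_eq_one_right omega_sq_mul_omega]

/-- For the special vector `v`, one has `ρ(S)v = v` and `ρ(T)v = ωv`,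
where `ω = e^{2πi/3}`. -/
theorem weil_representation_special_vector :
    Matrix.mulVec weilS specialVec = specialVec ∧
    Matrix.mulVec weilT specialVec =
      fun α => Complex.exp (2 * Real.pi * Complex.I / 3) * specialVec α :=
  ⟨weilS_mulVec_specialVec, weilT_mulVec_specialVec⟩
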